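/- (Positivity-preserving property.) If the CFL condition λ ≤ min{(8 − 27α)/(27L), 2/(27L), α/L} holds, then the MUSCL–Hancock update of any nonnegative summable sequence is nonnegative: ρ'_j ≥ 0 for every j ∈ ℤ. -/

import Mathlib

open MeasureTheory

noncomputable section

/-- minmod limiter of three arguments. -/
def minmod3 (a b c : ℝ) : ℝ :=
  if 0 < a ∧ 0 < b ∧ 0 < c then min a (min b c)
  else if a < 0 ∧ b < 0 ∧ c < 0 then max a (max b c)
  else 0

/-- MUSCL slopes `σ_j = 2θ·minmod(ρ_j − ρ_{j−1}, (ρ_{j+1} − ρ_{j−1})/2, ρ_{j+1} − ρ_j)`. -/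
def slp (θ : ℝ) (ρ : ℤ → ℝ) (j : ℤ) : ℝ :=
  2 * θ * minmod3 (ρ j - ρ (j - 1)) ((ρ (j + 1) - ρ (j - 1)) / 2) (ρ (j + 1) - ρ j)

/-- left interface value `ρ⁻_{j+1/2} = ρ_j + σ_j/2`. -/
def intL (θ : ℝ) (ρ : ℤ → ℝ) (j : ℤ) : ℝ := ρ j + slp θ ρ j / 2

/-- right interface value `ρ⁺_{j−1/2} = ρ_j − σ_j/2`. -/
def intR (θ : ℝ) (ρ : ℤ → ℝ) (j : ℤ) : ℝ := ρ j - slp θ ρ j / 2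

/-- discrete convolution `A_j = Δx·Σ_l μ((j−l)Δx)·ρ_l`. -/
def Adisc (μ : ℝ → ℝ) (Δx : ℝ) (ρ : ℤ → ℝ) (j : ℤ) : ℝ :=
  Δx * ∑' l : ℤ, μ (((j : ℝ) - (l : ℝ)) * Δx) * ρ l

/-- `s_j = θ·(A_{j+1} − A_{j−1})`. -/
def sdisc (μ : ℝ → ℝ) (θ Δx : ℝ) (ρ : ℤ → ℝ) (j : ℤ) : ℝ :=
  θ * (Adisc μ Δx ρ (j + 1) - Adisc μ Δx ρ (j - 1))

/-- `A⁻_{j+1/2} = A_j + s_j/2`. -/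
def AdiscL (μ : ℝ → ℝ) (θ Δx : ℝ) (ρ : ℤ → ℝ) (j : ℤ) : ℝ :=
  Adisc μ Δx ρ j + sdisc μ θ Δx ρ j / 2

/-- `A⁺_{j−1/2} = A_j − s_j/2`. -/
def AdiscR (μ : ℝ → ℝ) (θ Δx : ℝ) (ρ : ℤ → ℝ) (j : ℤ) : ℝ :=
  Adisc μ Δx ρ j - sdisc μ θ Δx ρ j / 2

/-- mid-time value `ρ^{½,−}_{j+1/2}`. -/
def midL (f : ℝ → ℝ → ℝ) (μ : ℝ → ℝ) (θ lam Δx : ℝ) (ρ : ℤ → ℝ) (j : ℤ) : ℝ :=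
  intL θ ρ j - lam / 2 *
    (f (intL θ ρ j) (AdiscL μ θ Δx ρ j) - f (intR θ ρ j) (AdiscR μ θ Δx ρ j))

/-- mid-time value `ρ^{½,+}_{j−1/2}`. -/
def midR (f : ℝ → ℝ → ℝ) (μ : ℝ → ℝ) (θ lam Δx : ℝ) (ρ : ℤ → ℝ) (j : ℤ) : ℝ :=
  intR θ ρ j - lam / 2 *
    (f (intL θ ρ j) (AdiscL μ θ Δx ρ j) - f (intR θ ρ j) (AdiscR μ θ Δx ρ j))

/-- mid-time convolution `A^{½}_{j+1/2}`. -/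
def Amid (f : ℝ → ℝ → ℝ) (μ : ℝ → ℝ) (θ lam Δx : ℝ) (ρ : ℤ → ℝ) (j : ℤ) : ℝ :=
  Δx / 2 * ∑' l : ℤ,
    (μ (((j : ℝ) + 1 - (l : ℝ)) * Δx) * midR f μ θ lam Δx ρ l +
     μ (((j : ℝ) - (l : ℝ)) * Δx) * midL f μ θ lam Δx ρ l)

/-- Lax–Friedrichs type numerical flux `F(u,v,A)`. -/
def numFlux (f : ℝ → ℝ → ℝ) (α lam u v A : ℝ) : ℝ :=
  (f u A + f v A) / 2 - α * (v - u) / (2 * lam)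

/-- MUSCL–Hancock update `ρ'_j`. -/
def mhUpdate (f : ℝ → ℝ → ℝ) (μ : ℝ → ℝ) (θ α lam Δx : ℝ) (ρ : ℤ → ℝ) (j : ℤ) : ℝ :=
  ρ j - lam *
    (numFlux f α lam (midL f μ θ lam Δx ρ j) (midR f μ θ lam Δx ρ (j + 1))
        (Amid f μ θ lam Δx ρ j) -
     numFlux f α lam (midL f μ θ lam Δx ρ (j - 1)) (midR f μ θ lam Δx ρ j)
        (Amid f μ θ lam Δx ρ (j - 1)))

/-
Positivity comes from writing `ρ'_j` as a sum of three terms, each nonnegative under the CFL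
condition. Since `f(0, A) = 0`, `|f(r, A)| ≤ L|r|`; the limited slopes satisfy `|σ_j| ≤ ρ_j`, so
both interface values lie in `[ρ_j/2, 3ρ_j/2]` and add up to `2ρ_j`. The Hancock half step then
moves them by at most `λLρ_j`, which keeps them nonnegative with sum at most `2(1 + λL)ρ_j`.
In the Lax–Friedrichs update the outer mid-time values enter with coefficient `α/2 ∓ λf/2 ≥ 0`
(as `λL ≤ α`), and the inner ones with total weight at most `(α + λL)(1 + λL)ρ_j ≤ ρ_j`.
-/

lemma abs_le_mul_abs_of_abs_deriv_le {g : ℝ → ℝ} {L : ℝ} (hg : Differentiable ℝ g)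
    (hg0 : g 0 = 0) (hL : ∀ x, |deriv g x| ≤ L) (r : ℝ) : |g r| ≤ L * |r| := by
  simpa [hg0] using Convex.norm_image_sub_le_of_norm_deriv_le (fun x _ => hg x)
    (fun x _ => by simpa using hL x) convex_univ (Set.mem_univ 0) (Set.mem_univ r)

lemma abs_apply_le_of_abs_partialDeriv_le {f : ℝ → ℝ → ℝ} {L : ℝ}
    (hf : ContDiff ℝ 2 (Function.uncurry f)) (hf0 : ∀ A, f 0 A = 0)
    (hL : ∀ r A, |deriv (fun x => f x A) r| ≤ L) (r A : ℝ) : |f r A| ≤ L * |r| :=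
  abs_le_mul_abs_of_abs_deriv_le
    ((hf.differentiable two_ne_zero).comp (differentiable_id.prodMk (differentiable_const A)))
    (hf0 A) (fun x => hL x A) r

lemma abs_minmod3_le {a b c : ℝ} (ha : 0 ≤ a) (hb : 0 ≤ b) (hc : 0 ≤ c) :
    |minmod3 (b - a) ((c - a) / 2) (c - b)| ≤ b := by
  unfold minmod3
  split_ifs with hpos hneg
  · have := min_le_left (b - a) (min ((c - a) / 2) (c - b))
    have := lt_min hpos.1 (lt_min hpos.2.1 hpos.2.2)
    rw [abs_of_pos this]
    linarith
  · have := (le_max_right ((c - a) / 2) (c - b)).trans (le_max_right (b - a) _)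
    have := max_lt hneg.1 (max_lt hneg.2.1 hneg.2.2)
    rw [abs_of_neg this]
    linarith
  · simpa using hb

section Reconstruction

variable {θ : ℝ} {ρ : ℤ → ℝ}

lemma abs_slp_le (hθ0 : 0 ≤ θ) (hθ1 : θ ≤ 1 / 2) (hρ : ∀ j, 0 ≤ ρ j) (j : ℤ) :
    |slp θ ρ j| ≤ ρ j := by
  have hm := abs_minmod3_le (hρ (j - 1)) (hρ j) (hρ (j + 1))
  rw [slp, abs_mul, abs_of_nonneg (by positivity : 0 ≤ 2 * θ)]
  nlinarith [abs_nonneg (minmod3 (ρ j - ρ (j - 1)) ((ρ (j + 1) - ρ (j - 1)) / 2)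
    (ρ (j + 1) - ρ j))]

lemma half_le_intL (hθ0 : 0 ≤ θ) (hθ1 : θ ≤ 1 / 2) (hρ : ∀ j, 0 ≤ ρ j) (j : ℤ) :
    ρ j / 2 ≤ intL θ ρ j := by
  have := (abs_le.1 (abs_slp_le hθ0 hθ1 hρ j)).1
  rw [intL]
  linarith

lemma half_le_intR (hθ0 : 0 ≤ θ) (hθ1 : θ ≤ 1 / 2) (hρ : ∀ j, 0 ≤ ρ j) (j : ℤ) :
    ρ j / 2 ≤ intR θ ρ j := by
  have := (abs_le.1 (abs_slp_le hθ0 hθ1 hρ j)).2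
  rw [intR]
  linarith

lemma intL_add_intR (j : ℤ) : intL θ ρ j + intR θ ρ j = 2 * ρ j := by
  rw [intL, intR]
  ring

end Reconstruction

def hancockIncrement (f : ℝ → ℝ → ℝ) (μ : ℝ → ℝ) (θ lam Δx : ℝ) (ρ : ℤ → ℝ) (j : ℤ) : ℝ :=
  lam / 2 * (f (intL θ ρ j) (AdiscL μ θ Δx ρ j) - f (intR θ ρ j) (AdiscR μ θ Δx ρ j))

section HalfStep

variable {f : ℝ → ℝ → ℝ} {μ : ℝ → ℝ} {θ lam Δx L : ℝ} {ρ : ℤ → ℝ}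

lemma midL_eq (j : ℤ) : midL f μ θ lam Δx ρ j = intL θ ρ j - hancockIncrement f μ θ lam Δx ρ j :=
  rfl

lemma midR_eq (j : ℤ) : midR f μ θ lam Δx ρ j = intR θ ρ j - hancockIncrement f μ θ lam Δx ρ j :=
  rfl

variable (hfL : ∀ r A, |f r A| ≤ L * |r|) (hlam : 0 ≤ lam)
  (hθ0 : 0 ≤ θ) (hθ1 : θ ≤ 1 / 2) (hρ : ∀ j, 0 ≤ ρ j)
include hfL hlam hθ0 hθ1 hρ

lemma abs_hancockIncrement_le (j : ℤ) :
    |hancockIncrement f μ θ lam Δx ρ j| ≤ lam * L * ρ j := by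
  have hl := half_le_intL hθ0 hθ1 hρ j
  have hr := half_le_intR hθ0 hθ1 hρ j
  have hfl := hfL (intL θ ρ j) (AdiscL μ θ Δx ρ j)
  have hfr := hfL (intR θ ρ j) (AdiscR μ θ Δx ρ j)
  rw [abs_of_nonneg (a := intL θ ρ j) (by linarith [hρ j])] at hfl
  rw [abs_of_nonneg (a := intR θ ρ j) (by linarith [hρ j])] at hfr
  calc |hancockIncrement f μ θ lam Δx ρ j|
      ≤ lam / 2 * (|f (intL θ ρ j) (AdiscL μ θ Δx ρ j)| + |f (intR θ ρ j) (AdiscR μ θ Δx ρ j)|) := by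
        rw [hancockIncrement, abs_mul, abs_of_nonneg (by positivity : 0 ≤ lam / 2)]
        gcongr
        exact abs_sub _ _
    _ ≤ lam / 2 * (L * intL θ ρ j + L * intR θ ρ j) := by gcongr
    _ = lam * L * ρ j := by rw [← mul_add, intL_add_intR]; ring

lemma midL_add_midR_le (j : ℤ) :
    midL f μ θ lam Δx ρ j + midR f μ θ lam Δx ρ j ≤ 2 * (1 + lam * L) * ρ j := by
  have := (abs_le.1 (abs_hancockIncrement_le (μ := μ) (Δx := Δx) hfL hlam hθ0 hθ1 hρ j)).1
  rw [midL_eq, midR_eq]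
  linarith [intL_add_intR (θ := θ) (ρ := ρ) j]

lemma mul_midL_add_midR_le {α : ℝ} (hα : 0 ≤ α + lam * L)
    (hweight : (α + lam * L) * (1 + lam * L) ≤ 1) (j : ℤ) :
    (α + lam * L) * (midL f μ θ lam Δx ρ j + midR f μ θ lam Δx ρ j) ≤ 2 * ρ j :=
  calc (α + lam * L) * (midL f μ θ lam Δx ρ j + midR f μ θ lam Δx ρ j)
      ≤ (α + lam * L) * (2 * (1 + lam * L) * ρ j) := by
        gcongr
        exact midL_add_midR_le hfL hlam hθ0 hθ1 hρ j
    _ = 2 * ((α + lam * L) * (1 + lam * L)) * ρ j := by ring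
    _ ≤ 2 * 1 * ρ j := by gcongr; exact hρ j
    _ = 2 * ρ j := by ring

variable (hlamL : lam * L ≤ 1 / 2)
include hlamL

lemma midL_nonneg (j : ℤ) : 0 ≤ midL f μ θ lam Δx ρ j := by
  have := (abs_le.1 (abs_hancockIncrement_le (μ := μ) (Δx := Δx) hfL hlam hθ0 hθ1 hρ j)).2
  have := half_le_intL hθ0 hθ1 hρ j
  rw [midL_eq]
  linarith [mul_le_mul_of_nonneg_right hlamL (hρ j)]

lemma midR_nonneg (j : ℤ) : 0 ≤ midR f μ θ lam Δx ρ j := by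
  have := (abs_le.1 (abs_hancockIncrement_le (μ := μ) (Δx := Δx) hfL hlam hθ0 hθ1 hρ j)).2
  have := half_le_intR hθ0 hθ1 hρ j
  rw [midR_eq]
  linarith [mul_le_mul_of_nonneg_right hlamL (hρ j)]

end HalfStep

lemma sub_mul_numFlux_sub_nonneg {f : ℝ → ℝ → ℝ} {α lam L ρ u₁ v₁ u₂ v₂ A₁ A₂ : ℝ}
    (hfL : ∀ r A, |f r A| ≤ L * |r|) (hlam : 0 < lam) (hα : lam * L ≤ α)
    (hu₁ : 0 ≤ u₁) (hv₁ : 0 ≤ v₁) (hu₂ : 0 ≤ u₂) (hv₂ : 0 ≤ v₂)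
    (hinner : (α + lam * L) * (u₂ + v₁) ≤ 2 * ρ) :
    0 ≤ ρ - lam * (numFlux f α lam u₂ v₂ A₂ - numFlux f α lam u₁ v₁ A₁) := by
  have hbound : ∀ {r} A, 0 ≤ r → |lam * f r A| ≤ lam * L * r := fun {r} A hr => by
    have := hfL r A
    rw [abs_of_nonneg hr] at this
    rw [abs_mul, abs_of_pos hlam, mul_assoc]
    exact mul_le_mul_of_nonneg_left this hlam.le
  have hfv₂ := (abs_le.1 (hbound A₂ hv₂)).2
  have hfu₁ := (abs_le.1 (hbound A₁ hu₁)).1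
  have hfu₂ := (abs_le.1 (hbound A₂ hu₂)).2
  have hfv₁ := (abs_le.1 (hbound A₁ hv₁)).1
  have houter : lam * L * (u₁ + v₂) ≤ α * (u₁ + v₂) := by gcongr
  have hexpand : ρ - lam * (numFlux f α lam u₂ v₂ A₂ - numFlux f α lam u₁ v₁ A₁) =
      (α * (u₁ + v₂) - lam * f v₂ A₂ + lam * f u₁ A₁) / 2 +
      (2 * ρ - α * (u₂ + v₁) - lam * f u₂ A₂ + lam * f v₁ A₁) / 2 := by
    rw [numFlux, numFlux]
    field_simp
    ring
  rw [hexpand]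
  nlinarith

theorem stmt4_general (f : ℝ → ℝ → ℝ) (μ : ℝ → ℝ) (Δx Δt lam θ α L : ℝ)
    (hΔx : 0 < Δx) (hΔt : 0 < Δt) (hlam : lam = Δt / Δx)
    (hθ0 : 0 ≤ θ) (hθ1 : θ ≤ 1 / 2)
    (hf : ContDiff ℝ 2 (Function.uncurry f)) (hf0 : ∀ A : ℝ, f 0 A = 0)
    (hL : ∀ r A : ℝ, |deriv (fun x => f x A) r| ≤ L)
    (hCFL : lam ≤ min ((8 - 27 * α) / (27 * L)) (min (2 / (27 * L)) (α / L)))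
    (ρ : ℤ → ℝ) (hρ : ∀ j : ℤ, 0 ≤ ρ j) :
    ∀ j : ℤ, 0 ≤ mhUpdate f μ θ α lam Δx ρ j := by
  have hlam0 : 0 < lam := hlam ▸ div_pos hΔt hΔx
  have hfL := abs_apply_le_of_abs_partialDeriv_le hf hf0 hL
  have hL0 : 0 < L := by
    refine (le_trans (abs_nonneg _) (hL 0 0)).lt_of_ne fun h => ?_
    have := hCFL.trans ((min_le_right _ _).trans (min_le_right _ _))
    rw [← h, div_zero] at this
    linarith
  simp only [le_min_iff, le_div_iff₀ hL0, le_div_iff₀ (by positivity : 0 < 27 * L)] at hCFL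
  obtain ⟨hcfl₁, hcfl₂, hcfl₃⟩ := hCFL
  have hhalf : lam * L ≤ 1 / 2 := by linarith
  have hε : 0 ≤ lam * L := by positivity
  have hweight : (α + lam * L) * (1 + lam * L) ≤ 1 := by
    have hα8 : α + lam * L ≤ 8 / 27 := by linarith
    have hε2 : lam * L ≤ 2 / 27 := by linarith
    nlinarith [mul_le_mul hα8 hε2 hε (by norm_num)]
  intro j
  exact sub_mul_numFlux_sub_nonneg hfL hlam0 hcfl₃
    (midL_nonneg hfL hlam0.le hθ0 hθ1 hρ hhalf _) (midR_nonneg hfL hlam0.le hθ0 hθ1 hρ hhalf _)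
    (midL_nonneg hfL hlam0.le hθ0 hθ1 hρ hhalf _) (midR_nonneg hfL hlam0.le hθ0 hθ1 hρ hhalf _)
    (mul_midL_add_midR_le hfL hlam0.le hθ0 hθ1 hρ (by linarith) hweight j)

/-- positivity-preserving property of the MUSCL–Hancock update. -/
theorem stmt4 (f : ℝ → ℝ → ℝ) (μ : ℝ → ℝ) (Δx Δt lam θ α L : ℝ)
    (hΔx : 0 < Δx) (hΔt : 0 < Δt) (hlam : lam = Δt / Δx)
    (hθ0 : 0 ≤ θ) (hθ1 : θ ≤ 1 / 2) (hα0 : 0 < α) (hα1 : α < 8 / 27)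
    (hf : ContDiff ℝ 2 (Function.uncurry f)) (hf0 : ∀ A : ℝ, f 0 A = 0)
    (hL : ∀ r A : ℝ, |deriv (fun x => f x A) r| ≤ L)
    (hμ : ContDiff ℝ 2 μ) (hμc : HasCompactSupport μ)
    (hCFL : lam ≤ min ((8 - 27 * α) / (27 * L)) (min (2 / (27 * L)) (α / L)))
    (ρ : ℤ → ℝ) (hρ : ∀ j : ℤ, 0 ≤ ρ j) (hsum : Summable ρ) :
    ∀ j : ℤ, 0 ≤ mhUpdate f μ θ α lam Δx ρ j :=
  stmt4_general f μ Δx Δt lam θ α L hΔx hΔt hlam hθ0 hθ1 hf hf0 hL hCFL ρ hρ
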